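/- For any odd positive integers w1, w2, w3, any complex numbers y1, y2, and any nonnegative integer n: w3^n Σ_{k=0}^{n} (n choose k) E_{k,χ}(w1 y1) Σ_{a=0}^{w3 d − 1} (−1)^a χ(a) E_{n−k,χ}(w2 y2 + (w2/w3) a) w1^{n−k} w2^{k} is symmetric in w1 and w2; that is, it equals w3^n Σ_{k=0}^{n} (n choose k) E_{k,χ}(w2 y1) Σ_{a=0}^{w3 d − 1} (−1)^a χ(a) E_{n−k,χ}(w1 y2 + (w1/w3) a) w2^{n−k} w1^{k}. -/

import Mathlib

open Finset

/-- The formal exponential power series `e^{ct} = Σ cⁿ tⁿ/n!` in `ℂ[[t]]`. -/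
noncomputable def expPS (c : ℂ) : PowerSeries ℂ :=
  PowerSeries.mk fun n => c ^ n / n.factorial

/-- `Σ_{a=0}^{d-1} (-1)^a χ(a) e^{at}` as a formal power series. -/
noncomputable def altSum (χ : ℤ → ℂ) (d : ℕ) : PowerSeries ℂ :=
  ∑ a ∈ Finset.range d, ((-1 : ℂ) ^ a * χ (a : ℤ)) • expPS (a : ℂ)

/-- `E` is the family of generalized Euler polynomials attached to `χ` mod `d`:
`(Σ_{n≥0} E_{n,χ}(x) tⁿ/n!) · (e^{dt}+1) = 2 e^{xt} · Σ_{a=0}^{d-1} (-1)^a χ(a) e^{at}`. -/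
def IsGenEuler (d : ℕ) (χ : ℤ → ℂ) (E : ℕ → ℂ → ℂ) : Prop :=
  ∀ x : ℂ, (PowerSeries.mk fun n => E n x / n.factorial) * (expPS (d : ℂ) + 1)
    = (2 : PowerSeries ℂ) * expPS x * altSum χ d

/-- The alternating generalized power sum `T_k(n,χ) = Σ_{a=0}^{n} (-1)^a χ(a) a^k`
(with the convention `0^0 = 1`). -/
noncomputable def altPowSum (χ : ℤ → ℂ) (k n : ℕ) : ℂ :=
  ∑ a ∈ Finset.range (n + 1), (-1 : ℂ) ^ a * χ (a : ℤ) * (a : ℂ) ^ k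

/-- The multinomial coefficient `(k+l+m)! / (k! l! m!)`. -/
def multinom (k l m : ℕ) : ℕ :=
  (k + l + m).factorial / (k.factorial * l.factorial * m.factorial)

/-!
Write `F(u, v)` for the product of the exponential generating functions
`Σ E_{k,χ}(u y₁) (v w₃ t)ᵏ/k!` and
`Σ_{a<w₃d} (-1)^a χ(a) Σ E_{m,χ}(v y₂ + (v/w₃) a) (u w₃ t)ᵐ/m!`.
Multiplying by `(e^{v w₃ d t} + 1)(e^{u w₃ d t} + 1)` and using the generating-function identity
twice gives
`4 e^{u v w₃ y₁ t} Σ_{a<w₃d} (-1)^a χ(a) e^{u v (w₃ y₂ + a) t} · A(u w₃ t) A(v w₃ t)`,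
with `A(t) = Σ_{a<d} (-1)^a χ(a) e^{at}`, which is symmetric in `u` and `v`. The factor is a unit of
`ℂ[[t]]`, so `F(w₁, w₂) = F(w₂, w₁)`, and comparing `n`-th coefficients gives the theorem.
-/

lemma PowerSeries.rescale_smul {R : Type*} [CommSemiring R] (c a : R) (f : PowerSeries R) :
    rescale c (a • f) = a • rescale c f := by
  ext n
  simp only [coeff_rescale, coeff_smul, smul_eq_mul]
  ring

lemma expPS_eq_rescale_exp (c : ℂ) : expPS c = PowerSeries.rescale c (PowerSeries.exp ℂ) := by
  ext n
  simp [expPS, PowerSeries.coeff_rescale, PowerSeries.coeff_exp, div_eq_mul_inv]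

lemma rescale_expPS (c x : ℂ) : PowerSeries.rescale c (expPS x) = expPS (c * x) := by
  rw [expPS_eq_rescale_exp, expPS_eq_rescale_exp, PowerSeries.rescale_rescale, mul_comm]

lemma constantCoeff_expPS (c : ℂ) : PowerSeries.constantCoeff (expPS c) = 1 := by
  simp [expPS]

lemma expPS_add_one_ne_zero (c : ℂ) : expPS c + 1 ≠ 0 := fun h => by
  simpa [constantCoeff_expPS] using congrArg PowerSeries.constantCoeff h

noncomputable def eulerSeries (E : ℕ → ℂ → ℂ) (x : ℂ) : PowerSeries ℂ :=
  PowerSeries.mk fun m => E m x / m.factorial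

noncomputable def twistedSum (χ : ℤ → ℂ) (N : ℕ) (f : ℕ → PowerSeries ℂ) : PowerSeries ℂ :=
  ∑ a ∈ range N, ((-1 : ℂ) ^ a * χ (a : ℤ)) • f a

lemma rescale_twistedSum (c : ℂ) (χ : ℤ → ℂ) (N : ℕ) (f : ℕ → PowerSeries ℂ) :
    PowerSeries.rescale c (twistedSum χ N f) =
      twistedSum χ N fun a => PowerSeries.rescale c (f a) := by
  simp only [twistedSum, map_sum, PowerSeries.rescale_smul]

lemma twistedSum_mul (χ : ℤ → ℂ) (N : ℕ) (f : ℕ → PowerSeries ℂ) (g : PowerSeries ℂ) :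
    twistedSum χ N f * g = twistedSum χ N fun a => f a * g := by
  simp only [twistedSum, sum_mul, smul_mul_assoc]

lemma mul_twistedSum (χ : ℤ → ℂ) (N : ℕ) (f : ℕ → PowerSeries ℂ) (g : PowerSeries ℂ) :
    g * twistedSum χ N f = twistedSum χ N fun a => g * f a := by
  simp only [twistedSum, mul_sum, mul_smul_comm]

lemma coeff_twistedSum_eulerSeries (χ : ℤ → ℂ) (N : ℕ) (E : ℕ → ℂ → ℂ) (x : ℕ → ℂ) (m : ℕ) :
    PowerSeries.coeff m (twistedSum χ N fun a => eulerSeries E (x a)) =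
      (∑ a ∈ range N, (-1 : ℂ) ^ a * χ (a : ℤ) * E m (x a)) / m.factorial := by
  simp only [twistedSum, eulerSeries, map_sum, PowerSeries.coeff_smul, PowerSeries.coeff_mk,
    smul_eq_mul, sum_div, mul_div_assoc]

namespace IsGenEuler

variable {d : ℕ} {χ : ℤ → ℂ} {E : ℕ → ℂ → ℂ}

lemma rescale_mul (hE : IsGenEuler d χ E) (c x : ℂ) :
    PowerSeries.rescale c (eulerSeries E x) * (expPS (c * d) + 1) =
      2 * expPS (c * x) * PowerSeries.rescale c (altSum χ d) := by
  simpa [eulerSeries, rescale_expPS, map_ofNat] using congrArg (PowerSeries.rescale c) (hE x)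

lemma rescale_twistedSum_mul (hE : IsGenEuler d χ E) (c : ℂ) (N : ℕ) (x : ℕ → ℂ) :
    PowerSeries.rescale c (twistedSum χ N fun a => eulerSeries E (x a)) * (expPS (c * d) + 1) =
      2 * (twistedSum χ N fun a => expPS (c * x a)) * PowerSeries.rescale c (altSum χ d) := by
  rw [rescale_twistedSum, twistedSum_mul, mul_assoc, twistedSum_mul, mul_twistedSum]
  exact congrArg (twistedSum χ N) (funext fun a => by rw [hE.rescale_mul]; ring)

end IsGenEuler

/-- `F(u, v)` of the header. -/
noncomputable def eulerPairSeries (E : ℕ → ℂ → ℂ) (χ : ℤ → ℂ) (d w₃ : ℕ) (y₁ y₂ u v : ℂ) :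
    PowerSeries ℂ :=
  PowerSeries.rescale (v * w₃) (eulerSeries E (u * y₁)) *
    PowerSeries.rescale (u * w₃)
      (twistedSum χ (w₃ * d) fun a => eulerSeries E (v * y₂ + v / w₃ * a))

section PairSeries

variable {d : ℕ} {χ : ℤ → ℂ} {E : ℕ → ℂ → ℂ} {w₃ : ℕ}

lemma eulerPairSeries_mul (hE : IsGenEuler d χ E) (hw₃ : (w₃ : ℂ) ≠ 0) (y₁ y₂ u v : ℂ) :
    eulerPairSeries E χ d w₃ y₁ y₂ u v * ((expPS (v * w₃ * d) + 1) * (expPS (u * w₃ * d) + 1)) =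
      4 * expPS (u * v * w₃ * y₁) *
        (twistedSum χ (w₃ * d) fun a => expPS (u * v * (w₃ * y₂ + a))) *
        (PowerSeries.rescale (u * w₃) (altSum χ d) *
          PowerSeries.rescale (v * w₃) (altSum χ d)) := by
  have hexp : ∀ a : ℕ, (u * w₃) * (v * y₂ + v / w₃ * a) = u * v * (w₃ * y₂ + a) := fun a => by
    field_simp
  calc eulerPairSeries E χ d w₃ y₁ y₂ u v * ((expPS (v * w₃ * d) + 1) * (expPS (u * w₃ * d) + 1))
      = (PowerSeries.rescale (v * w₃) (eulerSeries E (u * y₁)) * (expPS (v * w₃ * d) + 1)) *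
          (PowerSeries.rescale (u * w₃)
            (twistedSum χ (w₃ * d) fun a => eulerSeries E (v * y₂ + v / w₃ * a)) *
            (expPS (u * w₃ * d) + 1)) := by
        rw [eulerPairSeries]; ring
    _ = (2 * expPS (v * w₃ * (u * y₁)) * PowerSeries.rescale (v * w₃) (altSum χ d)) *
          (2 * (twistedSum χ (w₃ * d) fun a => expPS (u * v * (w₃ * y₂ + a))) *
            PowerSeries.rescale (u * w₃) (altSum χ d)) := by
        rw [hE.rescale_mul, hE.rescale_twistedSum_mul,
          congrArg (twistedSum χ _) (funext fun a => by rw [hexp])]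
    _ = _ := by
        rw [show v * w₃ * (u * y₁) = u * v * w₃ * y₁ by ring]
        ring

lemma eulerPairSeries_comm (hE : IsGenEuler d χ E) (hw₃ : (w₃ : ℂ) ≠ 0) (y₁ y₂ u v : ℂ) :
    eulerPairSeries E χ d w₃ y₁ y₂ u v = eulerPairSeries E χ d w₃ y₁ y₂ v u := by
  refine mul_right_cancel₀
    (mul_ne_zero (expPS_add_one_ne_zero (v * w₃ * d)) (expPS_add_one_ne_zero (u * w₃ * d))) ?_
  rw [eulerPairSeries_mul hE hw₃, mul_comm (expPS (v * w₃ * d) + 1),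
    eulerPairSeries_mul hE hw₃, mul_comm v u]
  ring

lemma factorial_mul_coeff_eulerPairSeries (y₁ y₂ u v : ℂ) (n : ℕ) :
    (n.factorial : ℂ) * PowerSeries.coeff n (eulerPairSeries E χ d w₃ y₁ y₂ u v) =
      (w₃ : ℂ) ^ n * ∑ k ∈ range (n + 1), (n.choose k : ℂ) * E k (u * y₁) *
        (∑ a ∈ range (w₃ * d), (-1 : ℂ) ^ a * χ (a : ℤ) * E (n - k) (v * y₂ + v / w₃ * a)) *
          u ^ (n - k) * v ^ k := by
  rw [eulerPairSeries, PowerSeries.coeff_mul, Nat.sum_antidiagonal_eq_sum_range_succ_mk,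
    mul_sum, mul_sum]
  refine sum_congr rfl fun k hk => ?_
  have hkn : k ≤ n := Nat.lt_succ_iff.mp (mem_range.mp hk)
  have hw : (w₃ : ℂ) ^ n = w₃ ^ k * w₃ ^ (n - k) := by rw [← pow_add, Nat.add_sub_cancel' hkn]
  rw [PowerSeries.coeff_rescale, PowerSeries.coeff_rescale, coeff_twistedSum_eulerSeries,
    eulerSeries, PowerSeries.coeff_mk, Nat.cast_choose ℂ hkn, mul_pow, mul_pow, hw]
  field_simp

end PairSeries

theorem stmt_13_general (d : ℕ) (χ : ℤ → ℂ)
    (E : ℕ → ℂ → ℂ) (hE : IsGenEuler d χ E)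
    (w1 w2 w3 : ℕ) (hw3 : 0 < w3)
    (y1 y2 : ℂ) (n : ℕ) :
    ((w3 : ℂ) ^ n * ∑ k ∈ range (n + 1),
      (n.choose k : ℂ) * E k ((w1 : ℂ) * y1) *
        (∑ a ∈ range (w3 * d), (-1 : ℂ) ^ a * χ (a : ℤ) *
          E (n - k) ((w2 : ℂ) * y2 + (w2 : ℂ) / (w3 : ℂ) * (a : ℂ))) *
        (w1 : ℂ) ^ (n - k) * (w2 : ℂ) ^ k)
    = (w3 : ℂ) ^ n * ∑ k ∈ range (n + 1),
      (n.choose k : ℂ) * E k ((w2 : ℂ) * y1) *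
        (∑ a ∈ range (w3 * d), (-1 : ℂ) ^ a * χ (a : ℤ) *
          E (n - k) ((w1 : ℂ) * y2 + (w1 : ℂ) / (w3 : ℂ) * (a : ℂ))) *
        (w2 : ℂ) ^ (n - k) * (w1 : ℂ) ^ k := by
  rw [← factorial_mul_coeff_eulerPairSeries, ← factorial_mul_coeff_eulerPairSeries,
    eulerPairSeries_comm hE (Nat.cast_ne_zero.mpr hw3.ne')]

/-- The expression (a-1(2)) for `I(Λ²₃¹)` is symmetric in `w₁` and `w₂`. -/
theorem stmt_13 (d : ℕ) (hd : Odd d) (hd0 : 0 < d) (χ : ℤ → ℂ)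
    (hper : ∀ a : ℤ, χ (a + d) = χ a)
    (hmul : ∀ a b : ℤ, χ (a * b) = χ a * χ b) (hone : χ 1 = 1)
    (hvan : ∀ a : ℤ, 1 < Int.gcd a d → χ a = 0)
    (E : ℕ → ℂ → ℂ) (hE : IsGenEuler d χ E)
    (w1 w2 w3 : ℕ) (hw1 : 0 < w1) (hw2 : 0 < w2) (hw3 : 0 < w3)
    (hw1o : Odd w1) (hw2o : Odd w2) (hw3o : Odd w3)
    (y1 y2 : ℂ) (n : ℕ) :
    ((w3 : ℂ) ^ n * ∑ k ∈ range (n + 1),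
      (n.choose k : ℂ) * E k ((w1 : ℂ) * y1) *
        (∑ a ∈ range (w3 * d), (-1 : ℂ) ^ a * χ (a : ℤ) *
          E (n - k) ((w2 : ℂ) * y2 + (w2 : ℂ) / (w3 : ℂ) * (a : ℂ))) *
        (w1 : ℂ) ^ (n - k) * (w2 : ℂ) ^ k)
    = (w3 : ℂ) ^ n * ∑ k ∈ range (n + 1),
      (n.choose k : ℂ) * E k ((w2 : ℂ) * y1) *
        (∑ a ∈ range (w3 * d), (-1 : ℂ) ^ a * χ (a : ℤ) *
          E (n - k) ((w1 : ℂ) * y2 + (w1 : ℂ) / (w3 : ℂ) * (a : ℂ))) *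
        (w2 : ℂ) ^ (n - k) * (w1 : ℂ) ^ k :=
  stmt_13_general d χ E hE w1 w2 w3 hw3 y1 y2 n
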